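/- For every cop-win graph G, the cops-and-robbers game with payoff equal to the capture time T(s_C, s_R) has a value: sup over robber strategies of inf over cop strategies of T equals inf over cop strategies of sup over robber strategies of T, and this value is finite. -/

import Mathlib

variable {V : Type*}

/-- `v` is in the closed neighborhood of `u` (reflexive graph moves). -/
def cnbr (G : SimpleGraph V) (u v : V) : Prop := u = v ∨ G.Adj u v

/-- The list of the first `n` moves of the play determined by the strategy pair
`(sC, sR)`: the move at an even index is the cop's, at an odd index the robber's
(so the moves are `x₀ y₀ x₁ y₁ ⋯`). -/
def crHist (sC sR : List V → V) : ℕ → List V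
  | 0 => []
  | n + 1 => crHist sC sR n ++ [(if Even n then sC else sR) (crHist sC sR n)]

/-- The `n`-th move of the play determined by `(sC, sR)`. -/
def crMove (sC sR : List V → V) (n : ℕ) : V :=
  (if Even n then sC else sR) (crHist sC sR n)

/-- A legal cop strategy: at any history where it is the cop's turn (even length),
the chosen vertex lies in the closed neighborhood of the cop's previous position
(the initial placement, on the empty history, is unconstrained). -/
def LegalCop (G : SimpleGraph V) (sC : List V → V) : Prop :=
  ∀ h : List V, Even h.length → ∀ x : V, h[h.length - 2]? = some x → cnbr G x (sC h)

/-- A legal robber strategy: at any history where it is the robber's turn (odd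
length at least 3), the chosen vertex lies in the closed neighborhood of the
robber's previous position (the initial placement is unconstrained). -/
def LegalRob (G : SimpleGraph V) (sR : List V → V) : Prop :=
  ∀ h : List V, Odd h.length → 3 ≤ h.length → ∀ y : V, h[h.length - 2]? = some y →
    cnbr G y (sR h)

/-- The capture time `T(sC, sR) ∈ ℕ∞` of the play determined by `(sC, sR)`: the first
round at which the cop's and robber's positions coincide (`⊤` if they never do). -/
noncomputable def capTime (sC sR : List V → V) : ℕ∞ :=
  sInf {t : ℕ∞ | ∃ n : ℕ, crMove sC sR (n + 1) = crMove sC sR n ∧ t = (((n + 1) / 2 : ℕ) : ℕ∞)}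

/-- `G` is cop-win: the cop has a legal strategy capturing every legal robber in
finitely many rounds. -/
def CopWin (G : SimpleGraph V) : Prop :=
  ∃ sC : List V → V, LegalCop G sC ∧ ∀ sR : List V → V, LegalRob G sR → capTime sC sR ≠ ⊤

/-- A memoryless cop strategy: on histories where it is the cop's turn, the move
depends only on the current cop and robber positions. -/
def MemCop (sC : List V → V) : Prop :=
  ∃ f : V → V → V, ∀ h : List V, Even h.length → ∀ x y : V,
    h[h.length - 2]? = some x → h[h.length - 1]? = some y → sC h = f x y

/-- A memoryless robber strategy: on histories where it is the robber's turn, the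
move depends only on the current robber and cop positions. -/
def MemRob (sR : List V → V) : Prop :=
  ∃ f : V → V → V, ∀ h : List V, Odd h.length → ∀ y x : V,
    h[h.length - 2]? = some y → h[h.length - 1]? = some x → sR h = f y x


/-!
Let `K` be the least `k` such that, from a suitable first vertex, the cop can force capture within
`k` rounds against every robber start (`CopCatchesWithin`, defined by backward induction on `k`).
Following that recursion the cop captures within `K` rounds. By minimality of `K`, the robber can
answer every cop start with a vertex from which capture within `K - 1` rounds cannot be forced,
and keep this invariant (with one round less) after every cop move, so he survives `K` rounds.
Such a `K` exists on a finite cop-win graph: otherwise some robber start is not catchable in any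
number of rounds, and by finiteness of the graph the robber can keep it so forever, contradicting
cop-win. Hence `K` is both the lower and the upper value of the game.
-/

open Filter

theorem iSup_iInf_eq_and_iInf_iSup_eq_of_saddle {α β γ : Type*} [CompleteLattice γ]
    (f : α → β → γ) (v : γ) (ha : ∃ a, ∀ b, f a b ≤ v) (hb : ∃ b, ∀ a, v ≤ f a b) :
    (⨆ b, ⨅ a, f a b) = v ∧ (⨅ a, ⨆ b, f a b) = v := by
  obtain ⟨a, ha⟩ := ha
  obtain ⟨b, hb⟩ := hb
  have hle : (⨆ b, ⨅ a, f a b) ≤ ⨅ a, ⨆ b, f a b := iSup_iInf_le_iInf_iSup (flip f)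
  have hupper : (⨅ a, ⨆ b, f a b) ≤ v := iInf_le_of_le a (iSup_le ha)
  have hlower : v ≤ ⨆ b, ⨅ a, f a b := le_iSup_of_le b (le_iInf hb)
  exact ⟨le_antisymm (hle.trans hupper) hlower, le_antisymm hupper (hlower.trans hle)⟩

lemma cnbr_refl (G : SimpleGraph V) (x : V) : cnbr G x x := Or.inl rfl

section Play

variable (sC sR : List V → V)

def copPos (n : ℕ) : V := crMove sC sR (2 * n)

def robPos (n : ℕ) : V := crMove sC sR (2 * n + 1)

lemma crHist_eq_map : ∀ n, crHist sC sR n = (List.range n).map (crMove sC sR)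
  | 0 => rfl
  | n + 1 => by
    rw [crHist, crHist_eq_map n, List.range_succ, List.map_append]
    simp [crMove, crHist_eq_map n]

lemma length_crHist (n : ℕ) : (crHist sC sR n).length = n := by
  simp [crHist_eq_map]

lemma getElem?_crHist {i n : ℕ} (h : i < n) : (crHist sC sR n)[i]? = some (crMove sC sR i) := by
  simp [crHist_eq_map, h]

lemma getElem?_crHist_length_sub_two (n : ℕ) :
    (crHist sC sR (n + 2))[(crHist sC sR (n + 2)).length - 2]? = some (crMove sC sR n) := by
  rw [length_crHist, Nat.add_sub_cancel, getElem?_crHist _ _ (by omega)]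

lemma getElem?_crHist_length_sub_one (n : ℕ) :
    (crHist sC sR (n + 1))[(crHist sC sR (n + 1)).length - 1]? = some (crMove sC sR n) := by
  rw [length_crHist, Nat.add_sub_cancel, getElem?_crHist _ _ (by omega)]

lemma copPos_eq (n : ℕ) : copPos sC sR n = sC (crHist sC sR (2 * n)) := by
  simp [copPos, crMove]

lemma robPos_eq (n : ℕ) : robPos sC sR n = sR (crHist sC sR (2 * n + 1)) := by
  simp [robPos, crMove]

variable {sC sR}

lemma cnbr_copPos_succ {G : SimpleGraph V} (hC : LegalCop G sC) (n : ℕ) :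
    cnbr G (copPos sC sR n) (copPos sC sR (n + 1)) := by
  rw [copPos_eq sC sR (n + 1)]
  exact hC _ (by simp [length_crHist]) _ (getElem?_crHist_length_sub_two sC sR (2 * n))

lemma cnbr_robPos_succ {G : SimpleGraph V} (hR : LegalRob G sR) (n : ℕ) :
    cnbr G (robPos sC sR n) (robPos sC sR (n + 1)) := by
  rw [robPos_eq sC sR (n + 1)]
  exact hR _ (by simp [length_crHist]) (by simp [length_crHist])
    _ (getElem?_crHist_length_sub_two sC sR (2 * n + 1))

lemma capTime_le_of_robPos_eq {n : ℕ} (h : robPos sC sR n = copPos sC sR n) :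
    capTime sC sR ≤ n :=
  sInf_le ⟨2 * n, h, by rw [show (2 * n + 1) / 2 = n by omega]⟩

lemma capTime_le_of_copPos_succ_eq {n : ℕ} (h : copPos sC sR (n + 1) = robPos sC sR n) :
    capTime sC sR ≤ (n + 1 : ℕ) :=
  sInf_le ⟨2 * n + 1, h, by rw [show (2 * n + 1 + 1) / 2 = n + 1 by omega]⟩

lemma le_capTime {K : ℕ} (hrob : ∀ n, robPos sC sR n = copPos sC sR n → K ≤ n)
    (hcop : ∀ n, copPos sC sR (n + 1) = robPos sC sR n → K ≤ n + 1) :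
    (K : ℕ∞) ≤ capTime sC sR := by
  refine le_sInf ?_
  rintro _ ⟨m, hm, rfl⟩
  obtain ⟨n, rfl | rfl⟩ := Nat.even_or_odd' m
  · exact_mod_cast (show (2 * n + 1) / 2 = n by omega) ▸ hrob n hm
  · exact_mod_cast (show (2 * n + 1 + 1) / 2 = n + 1 by omega) ▸ hcop n hm

end Play

section Rules

/-- The cop strategy that starts at `x₀` and enters round `n` by moving from `x` to
`next n x y`, where `y` is the robber's position. -/
def copOfRule (x₀ : V) (next : ℕ → V → V → V) (h : List V) : V :=
  if h.length = 0 then x₀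
  else next (h.length / 2) (h[h.length - 2]?.getD x₀) (h[h.length - 1]?.getD x₀)

/-- The robber strategy that answers the cop's first vertex `x` by `start x` and enters round `n`
by moving from `y` to `next n y x`, where `x` is the cop's new position. -/
noncomputable def robOfRule [Nonempty V] (start : V → V) (next : ℕ → V → V → V)
    (h : List V) : V :=
  if h.length ≤ 1 then start (h[0]?.getD (Classical.arbitrary V))
  else next (h.length / 2) (h[h.length - 2]?.getD (Classical.arbitrary V))
    (h[h.length - 1]?.getD (Classical.arbitrary V))

variable {G : SimpleGraph V}

lemma copPos_copOfRule_zero (x₀ : V) (next : ℕ → V → V → V) (sR : List V → V) :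
    copPos (copOfRule x₀ next) sR 0 = x₀ := by
  simp [copPos_eq, crHist, copOfRule]

lemma copPos_copOfRule_succ (x₀ : V) (next : ℕ → V → V → V) (sR : List V → V) (n : ℕ) :
    copPos (copOfRule x₀ next) sR (n + 1) =
      next (n + 1) (copPos (copOfRule x₀ next) sR n) (robPos (copOfRule x₀ next) sR n) := by
  rw [copPos_eq, show 2 * (n + 1) = 2 * n + 2 by ring, copOfRule, if_neg (by simp [length_crHist]),
    getElem?_crHist_length_sub_two _ _ (2 * n), getElem?_crHist_length_sub_one _ _ (2 * n + 1),
    length_crHist, show (2 * n + 2) / 2 = n + 1 by omega]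
  rfl

lemma legalCop_copOfRule {x₀ : V} {next : ℕ → V → V → V}
    (hnext : ∀ n x y, cnbr G x (next n x y)) : LegalCop G (copOfRule x₀ next) := by
  intro h _ x hx
  have hpos : h.length ≠ 0 := by
    have := (List.getElem?_eq_some_iff.mp hx).1
    omega
  rw [copOfRule, if_neg hpos, hx]
  exact hnext _ _ _

variable [Nonempty V]

lemma robPos_robOfRule_zero (start : V → V) (next : ℕ → V → V → V) (sC : List V → V) :
    robPos sC (robOfRule start next) 0 = start (copPos sC (robOfRule start next) 0) := by
  rw [robPos_eq, robOfRule, if_pos (by simp [length_crHist]), getElem?_crHist _ _ (by omega)]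
  rfl

lemma robPos_robOfRule_succ (start : V → V) (next : ℕ → V → V → V) (sC : List V → V) (n : ℕ) :
    robPos sC (robOfRule start next) (n + 1) =
      next (n + 1) (robPos sC (robOfRule start next) n)
        (copPos sC (robOfRule start next) (n + 1)) := by
  rw [robPos_eq, show 2 * (n + 1) + 1 = 2 * n + 1 + 2 by ring, robOfRule,
    if_neg (by simp [length_crHist]),
    getElem?_crHist_length_sub_two _ _ (2 * n + 1), getElem?_crHist_length_sub_one _ _ (2 * n + 2),
    length_crHist, show (2 * n + 1 + 2) / 2 = n + 1 by omega]
  rfl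

lemma legalRob_robOfRule {start : V → V} {next : ℕ → V → V → V}
    (hnext : ∀ n y x, cnbr G y (next n y x)) : LegalRob G (robOfRule start next) := by
  intro h _ h3 y hy
  rw [robOfRule, if_neg (by omega), hy]
  exact hnext _ _ _

end Rules

section Choice

variable (G : SimpleGraph V)

open Classical in
noncomputable def chooseMove (R : V → Prop) (u : V) : V :=
  if h : ∃ v, cnbr G u v ∧ R v then h.choose else u

lemma cnbr_chooseMove (R : V → Prop) (u : V) : cnbr G u (chooseMove G R u) := by
  unfold chooseMove
  split_ifs with h
  exacts [h.choose_spec.1, cnbr_refl G u]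

lemma chooseMove_spec {R : V → Prop} {u : V} (h : ∃ v, cnbr G u v ∧ R v) :
    R (chooseMove G R u) := by
  rw [chooseMove, dif_pos h]
  exact h.choose_spec.2

end Choice

/-- With the cop at `x` to move and the robber at `y`, the cop can force capture within `k`
rounds. -/
def CopCatchesWithin (G : SimpleGraph V) : ℕ → V → V → Prop
  | 0, x, y => x = y
  | k + 1, x, y =>
    x = y ∨ ∃ x', cnbr G x x' ∧ (x' = y ∨ ∀ y', cnbr G y y' → CopCatchesWithin G k x' y')

namespace CopCatchesWithin

variable {G : SimpleGraph V}

lemma refl : ∀ (k : ℕ) (x : V), CopCatchesWithin G k x x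
  | 0, _ => rfl
  | _ + 1, _ => Or.inl rfl

lemma succ : ∀ {k : ℕ} {x y : V}, CopCatchesWithin G k x y → CopCatchesWithin G (k + 1) x y
  | 0, _, _, h => Or.inl h
  | _ + 1, _, _, h =>
    h.imp_right <| Exists.imp fun _ => And.imp_right <| Or.imp_right fun hall y' hy' =>
      (hall y' hy').succ

lemma mono {j k : ℕ} {x y : V} (hjk : j ≤ k) (h : CopCatchesWithin G j x y) :
    CopCatchesWithin G k x y := by
  induction hjk with
  | refl => exact h
  | step _ ih => exact ih.succ

lemma ne_of_not {k : ℕ} {x y : V} (h : ¬ CopCatchesWithin G k x y) : x ≠ y :=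
  fun hxy => h (hxy ▸ refl k x)

lemma exists_not_of_not_succ {k : ℕ} {x y x' : V} (h : ¬ CopCatchesWithin G (k + 1) x y)
    (hx' : cnbr G x x') : x' ≠ y ∧ ∃ y', cnbr G y y' ∧ ¬ CopCatchesWithin G k x' y' := by
  simp only [CopCatchesWithin, not_or, not_exists, not_and, not_forall] at h
  obtain ⟨hx'y, y', hy', hnot⟩ := h.2 x' hx'
  exact ⟨hx'y, y', hy', hnot⟩

lemma exists_forall_of_forall_exists [Finite V] {x : V} {p : V → Prop}
    (h : ∀ y, p y → ∃ k, CopCatchesWithin G k x y) :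
    ∃ K, ∀ y, p y → CopCatchesWithin G K x y := by
  have hev : ∀ y, ∀ᶠ k in atTop, p y → CopCatchesWithin G k x y := fun y => by
    by_cases hy : p y
    · obtain ⟨k, hk⟩ := h y hy
      exact eventually_atTop.2 ⟨k, fun _ hjk _ => hk.mono hjk⟩
    · exact Eventually.of_forall fun _ hy' => absurd hy' hy
  exact (eventually_all.2 hev).exists

/-- Finiteness turns "for every reply of the robber some bound" into "one bound for all replies". -/
lemma exists_forall_not_of_forall_not [Finite V] {x y x' : V}
    (h : ∀ k, ¬ CopCatchesWithin G k x y) (hx' : cnbr G x x') :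
    ∃ y', cnbr G y y' ∧ ∀ k, ¬ CopCatchesWithin G k x' y' := by
  by_contra! hall
  obtain ⟨K, hK⟩ := exists_forall_of_forall_exists hall
  exact h (K + 1) (Or.inr ⟨x', hx', Or.inr hK⟩)

end CopCatchesWithin

section Strategies

variable {G : SimpleGraph V}

lemma exists_legalCop_capTime_le {K : ℕ} {x₀ : V} (hx₀ : ∀ y, CopCatchesWithin G K x₀ y) :
    ∃ sC, LegalCop G sC ∧ ∀ sR, LegalRob G sR → capTime sC sR ≤ K := by
  set sC := copOfRule x₀ fun m x y =>
    chooseMove G (fun x' => x' = y ∨ ∀ y', cnbr G y y' → CopCatchesWithin G (K - m) x' y') x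
  refine ⟨sC, legalCop_copOfRule fun _ _ _ => cnbr_chooseMove _ _ _, fun sR hR => ?_⟩
  have hinv : ∀ n : ℕ, capTime sC sR ≤ n ∨
      CopCatchesWithin G (K - n) (copPos sC sR n) (robPos sC sR n) := by
    intro n
    induction n with
    | zero => exact Or.inr (copPos_copOfRule_zero _ _ sR ▸ hx₀ _)
    | succ n ih =>
      have hmono : capTime sC sR ≤ n → capTime sC sR ≤ (n + 1 : ℕ) :=
        fun h => h.trans (by exact_mod_cast n.le_succ)
      rcases ih with hcap | hcatch
      · exact Or.inl (hmono hcap)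
      by_cases hxy : copPos sC sR n = robPos sC sR n
      · exact Or.inl (hmono (capTime_le_of_robPos_eq hxy.symm))
      have hK : K - n = K - (n + 1) + 1 := by
        by_contra hK
        rw [show K - n = 0 by omega] at hcatch
        exact hxy hcatch
      rw [hK] at hcatch
      have hmove : copPos sC sR (n + 1) = robPos sC sR n ∨ ∀ y', cnbr G (robPos sC sR n) y' →
          CopCatchesWithin G (K - (n + 1)) (copPos sC sR (n + 1)) y' := by
        rw [copPos_copOfRule_succ]
        exact chooseMove_spec G (hcatch.resolve_left hxy)
      rcases hmove with hcop | hall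
      · exact Or.inl (capTime_le_of_copPos_succ_eq hcop)
      · exact Or.inr (hall _ (cnbr_robPos_succ hR n))
  rcases hinv K with hcap | hcatch
  · exact hcap
  · rw [Nat.sub_self] at hcatch
    exact capTime_le_of_robPos_eq hcatch.symm

lemma exists_legalRob_forall_invariant [Nonempty V] (P : ℕ → V → V → Prop)
    (hstart : ∀ x, ∃ y, P 0 x y)
    (hstep : ∀ n x y x', P n x y → cnbr G x x' → ∃ y', cnbr G y y' ∧ P (n + 1) x' y') :
    ∃ sR, LegalRob G sR ∧
      ∀ sC, LegalCop G sC → ∀ n, P n (copPos sC sR n) (robPos sC sR n) := by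
  choose start hstart using hstart
  refine ⟨robOfRule start fun n y x => chooseMove G (P n x) y,
    legalRob_robOfRule fun _ _ _ => cnbr_chooseMove _ _ _, fun sC hC n => ?_⟩
  induction n with
  | zero => exact robPos_robOfRule_zero _ _ sC ▸ hstart _
  | succ n ih =>
    rw [robPos_robOfRule_succ]
    exact chooseMove_spec G (hstep _ _ _ _ ih (cnbr_copPos_succ hC n))

lemma le_capTime_of_not_copCatchesWithin {sC sR : List V → V} (hC : LegalCop G sC) {K : ℕ}
    (h : ∀ n < K, ¬ CopCatchesWithin G (K - 1 - n) (copPos sC sR n) (robPos sC sR n)) :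
    (K : ℕ∞) ≤ capTime sC sR := by
  refine le_capTime (fun n hrob => ?_) (fun n hcop => ?_)
  · by_contra! hn
    exact CopCatchesWithin.ne_of_not (h n hn) hrob.symm
  · by_contra! hn
    have hnot := h n (by omega)
    rw [show K - 1 - n = (K - 2 - n) + 1 by omega] at hnot
    exact (CopCatchesWithin.exists_not_of_not_succ hnot (cnbr_copPos_succ hC n)).1 hcop

lemma exists_legalRob_le_capTime [Nonempty V] {K : ℕ}
    (hK : ∀ j < K, ∀ x, ∃ y, ¬ CopCatchesWithin G j x y) :
    ∃ sR, LegalRob G sR ∧ ∀ sC, LegalCop G sC → (K : ℕ∞) ≤ capTime sC sR := by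
  obtain ⟨sR, hR, hinv⟩ := exists_legalRob_forall_invariant
    (fun n x y => n < K → ¬ CopCatchesWithin G (K - 1 - n) x y)
    (fun x => if h : 0 < K then (hK (K - 1) (by omega) x).imp fun _ hy _ => hy
      else ⟨x, fun h' => absurd h' h⟩)
    (fun n x y x' hxy hx' => by
      by_cases hn : n + 1 < K
      · have hnot := hxy (by omega)
        rw [show K - 1 - n = (K - 1 - (n + 1)) + 1 by omega] at hnot
        obtain ⟨-, y', hy', hnot'⟩ := CopCatchesWithin.exists_not_of_not_succ hnot hx'
        exact ⟨y', hy', fun _ => hnot'⟩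
      · exact ⟨y, cnbr_refl G y, fun h => absurd h hn⟩)
  exact ⟨sR, hR, fun sC hC => le_capTime_of_not_copCatchesWithin hC fun n hn => hinv sC hC n hn⟩

lemma exists_legalRob_capTime_eq_top [Finite V] [Nonempty V]
    (hstart : ∀ x, ∃ y, ∀ k, ¬ CopCatchesWithin G k x y) :
    ∃ sR, LegalRob G sR ∧ ∀ sC, LegalCop G sC → capTime sC sR = ⊤ := by
  obtain ⟨sR, hR, hinv⟩ := exists_legalRob_forall_invariant
    (fun _ x y => ∀ k, ¬ CopCatchesWithin G k x y) hstart
    (fun _ _ _ _ h hx' => CopCatchesWithin.exists_forall_not_of_forall_not h hx')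
  exact ⟨sR, hR, fun sC hC => ENat.eq_top_iff_forall_ge.2 fun K =>
    le_capTime_of_not_copCatchesWithin hC fun n _ => hinv sC hC n _⟩

lemma CopWin.nonempty (hcw : CopWin G) : Nonempty V :=
  let ⟨sC, _⟩ := hcw; ⟨sC []⟩

lemma CopWin.exists_forall_copCatchesWithin [Finite V] (hcw : CopWin G) :
    ∃ K x, ∀ y, CopCatchesWithin G K x y := by
  have := hcw.nonempty
  obtain ⟨sC, hC, hfin⟩ := hcw
  by_contra! hno
  have hstart : ∀ x, ∃ y, ∀ k, ¬ CopCatchesWithin G k x y := fun x => by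
    by_contra! hx
    obtain ⟨K, hK⟩ := CopCatchesWithin.exists_forall_of_forall_exists (p := fun _ => True)
      fun y _ => hx y
    obtain ⟨y, hy⟩ := hno K x
    exact hy (hK y trivial)
  obtain ⟨sR, hR, hesc⟩ := exists_legalRob_capTime_eq_top hstart
  exact hfin sR hR (hesc sC hC)

end Strategies

theorem copwin_game_has_value_general {V : Type*} [Fintype V] (G : SimpleGraph V)
    (hcw : CopWin G) :
    ∃ v : ℕ∞, v ≠ ⊤ ∧
      (⨆ sR : {s : List V → V // LegalRob G s}, ⨅ sC : {s : List V → V // LegalCop G s},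
        capTime sC.1 sR.1) = v ∧
      (⨅ sC : {s : List V → V // LegalCop G s}, ⨆ sR : {s : List V → V // LegalRob G s},
        capTime sC.1 sR.1) = v := by
  classical
  have := hcw.nonempty
  have hex := hcw.exists_forall_copCatchesWithin
  obtain ⟨sC, hC, hcop⟩ := exists_legalCop_capTime_le (Nat.find_spec hex).choose_spec
  obtain ⟨sR, hR, hrob⟩ := exists_legalRob_le_capTime (G := G) (K := Nat.find hex)
    fun j hj => by simpa using Nat.find_min hex hj
  exact ⟨_, ENat.natCast_ne_top _, iSup_iInf_eq_and_iInf_iSup_eq_of_saddle _ _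
    ⟨⟨sC, hC⟩, fun sR => hcop sR.1 sR.2⟩ ⟨⟨sR, hR⟩, fun sC => hrob sC.1 sC.2⟩⟩

/-- For every cop-win graph `G`, the CR game with payoff the capture
time has a (finite) value:
`sup_{s_R} inf_{s_C} T(s_C,s_R) = inf_{s_C} sup_{s_R} T(s_C,s_R) < ∞`,
where the quantification ranges over all legal (history-dependent) strategies. -/
theorem copwin_game_has_value {V : Type*} [Fintype V] (G : SimpleGraph V)
    (hconn : G.Connected) (hcw : CopWin G) :
    ∃ v : ℕ∞, v ≠ ⊤ ∧
      (⨆ sR : {s : List V → V // LegalRob G s}, ⨅ sC : {s : List V → V // LegalCop G s},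
        capTime sC.1 sR.1) = v ∧
      (⨅ sC : {s : List V → V // LegalCop G s}, ⨆ sR : {s : List V → V // LegalRob G s},
        capTime sC.1 sR.1) = v :=
  copwin_game_has_value_general G hcw
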